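/- Let k be an even integer, f, g, h : ℂ → ℂ, b ∈ ℂ, and f₀, g₀ ∈ ℂ. Suppose that, as s → k with s ≠ k, f(s) → f₀, g(s) → g₀, and (s − k)·h(s) → b, and that f(s) − g(s) = (1 − exp(−iπs))·(f(s) − h(s)) for all s ≠ k in some punctured neighborhood of k. Then f₀ − g₀ = −iπ·b; in particular f₀ = g₀ if and only if b = 0. -/

import Mathlib

open Complex Filter Real Topology

/-! Write `u(s) = 1 - exp(-iπs)`. Since `k` is even, `u(k) = 0` and `u'(k) = iπ`. Multiplying and
dividing by `s - k`, `f(s) - g(s) = (u(s)/(s - k)) · ((s - k) f(s) - (s - k) h(s))`, and the right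
side tends to `iπ · (0 - b)` because `f` has a finite limit at `k`. -/

section Residue

variable {𝕜 : Type*} [NontriviallyNormedField 𝕜]

theorem tendsto_div_sub_nhdsNE_of_hasDerivAt {u : 𝕜 → 𝕜} {d z₀ : 𝕜}
    (hu : HasDerivAt u d z₀) (hz₀ : u z₀ = 0) :
    Tendsto (fun s => u s / (s - z₀)) (𝓝[≠] z₀) (𝓝 d) := by
  refine (hasDerivAt_iff_tendsto_slope.mp hu).congr fun s => ?_
  rw [slope_def_field, hz₀, sub_zero]

theorem lim_sub_eq_neg_deriv_mul_residue {u F G H : 𝕜 → 𝕜} {d z₀ b f₀ g₀ : 𝕜}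
    (hu : HasDerivAt u d z₀) (hz₀ : u z₀ = 0)
    (hF : Tendsto F (𝓝[≠] z₀) (𝓝 f₀)) (hG : Tendsto G (𝓝[≠] z₀) (𝓝 g₀))
    (hH : Tendsto (fun s => (s - z₀) * H s) (𝓝[≠] z₀) (𝓝 b))
    (hid : ∀ᶠ s in 𝓝[≠] z₀, F s - G s = u s * (F s - H s)) :
    f₀ - g₀ = -d * b := by
  have hsub : Tendsto (fun s => s - z₀) (𝓝[≠] z₀) (𝓝 0) :=
    ((continuous_sub_right z₀).tendsto' z₀ 0 (sub_self z₀)).mono_left nhdsWithin_le_nhds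
  have hprod := (tendsto_div_sub_nhdsNE_of_hasDerivAt hu hz₀).mul ((hsub.mul hF).sub hH)
  have hdiff : Tendsto (fun s => F s - G s) (𝓝[≠] z₀) (𝓝 (d * (0 * f₀ - b))) := by
    refine hprod.congr' ?_
    filter_upwards [hid, self_mem_nhdsWithin] with s hs hne
    have : s - z₀ ≠ 0 := sub_ne_zero.mpr hne
    rw [hs]
    field_simp
  rw [tendsto_nhds_unique (hF.sub hG) hdiff]
  ring

end Residue

theorem exp_neg_I_mul_pi_mul_intCast_of_even {k : ℤ} (hk : Even k) :
    exp (-(I * π * k)) = 1 := by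
  obtain ⟨m, rfl⟩ := hk
  rw [show -(I * π * ((m + m : ℤ) : ℂ)) = (-m : ℤ) * (2 * π * I) by push_cast; ring]
  exact exp_int_mul_two_pi_mul_I _

theorem hasDerivAt_one_sub_exp_neg_I_mul_pi (s : ℂ) :
    HasDerivAt (fun s => 1 - exp (-(I * π * s))) (I * π * exp (-(I * π * s))) s := by
  have hlin : HasDerivAt (fun s : ℂ => -(I * π * s)) (-(I * π)) s := by
    exact ((hasDerivAt_id s).const_mul (I * π)).neg.congr_deriv (by simp)
  exact ((hasDerivAt_const s 1).sub hlin.cexp).congr_deriv (by ring)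

/-- Let `k` be an even integer, `f, g, h : ℂ → ℂ`, `b ∈ ℂ`, `f₀, g₀ ∈ ℂ`.
If, as `s → k`, `s ≠ k`, `f(s) → f₀`, `g(s) → g₀`, `(s − k)·h(s) → b`, and
`f(s) − g(s) = (1 − exp(−iπs))·(f(s) − h(s))` on a punctured neighborhood of `k`, then
`f₀ − g₀ = −iπ·b`; in particular `f₀ = g₀` if and only if `b = 0`. -/
theorem zeta_values_diff_eq_neg_i_pi_residue
    (k : ℤ) (hk : Even k) (f g h : ℂ → ℂ) (b f₀ g₀ : ℂ)
    (hf : Tendsto f (nhdsWithin (k : ℂ) {(k : ℂ)}ᶜ) (nhds f₀))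
    (hg : Tendsto g (nhdsWithin (k : ℂ) {(k : ℂ)}ᶜ) (nhds g₀))
    (hh : Tendsto (fun s : ℂ => (s - (k : ℂ)) * h s) (nhdsWithin (k : ℂ) {(k : ℂ)}ᶜ) (nhds b))
    (hid : ∀ᶠ s in nhdsWithin (k : ℂ) {(k : ℂ)}ᶜ,
      f s - g s = (1 - Complex.exp (-(Complex.I * (π : ℂ) * s))) * (f s - h s)) :
    f₀ - g₀ = -(Complex.I * (π : ℂ)) * b ∧ (f₀ = g₀ ↔ b = 0) := by
  have hexp := exp_neg_I_mul_pi_mul_intCast_of_even hk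
  have hderiv : HasDerivAt (fun s => 1 - exp (-(I * π * s))) (I * π) k := by
    simpa [hexp] using hasDerivAt_one_sub_exp_neg_I_mul_pi k
  have hdiff := lim_sub_eq_neg_deriv_mul_residue hderiv (by simp [hexp]) hf hg hh hid
  refine ⟨hdiff, ?_⟩
  have hIπ : -(I * (π : ℂ)) ≠ 0 := by simp [I_ne_zero, pi_ne_zero]
  rw [← sub_eq_zero, hdiff, mul_eq_zero, or_iff_right hIπ]
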